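/- arXiv:1601.02942 — 5 statements merged into one kernel-verified Lean document; each statement's English description precedes it below -/
import Mathlib

section
/- Let A, P, Q ∈ ℝ² be affinely independent points and let U₀, U₁, Ũ₁ : ℝ² → ℝ be affine functions with (constant) gradients ∇U₀, ∇U₁, ∇Ũ₁ ∈ ℝ². Assume the continuity conditions Ũ₁(P) = U₁(P) and Ũ₁(Q) = U₁(Q) (agreement on the edge PQ), and Ũ₁(P) = U₀(P) and Ũ₁(A) = U₀(A) (agreement on the edge PA). Let α̃ = ∠APQ be the interior angle at P of the triangle APQ. Then ‖∇Ũ₁ − ∇U₁‖ · sin(α̃) · ‖A − P‖ = |⟨A − P, ∇U₀ − ∇U₁⟩|. (Since sin(π − α̃) = sin α̃, this is the paper's identity |∇(Ũ₁ − U₁)| = (cos ξ / sin(π − α̃)) |∇(U₀ − U₁)|, where ξ is the angle between ∇(U₀ − U₁) and the edge vector v = A − P.) -/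
/-!
Continuity across `PQ` makes `∇(Ũ₁ − U₁)` normal to `Q − P`, and continuity across `PA` makes
`∇(Ũ₁ − U₀)` normal to `A − P`, so `⟪A − P, ∇(U₀ − U₁)⟫ = ⟪A − P, ∇(Ũ₁ − U₁)⟫`. In the plane,
a normal `d` of `u ≠ 0` pairs with `v` to `± ‖d‖` times the height `sin ∠(v, u) ‖v‖` of `v` over
the line `ℝ u`: with the area form `ω`, `⟪u, v⟫⟪u, d⟫ + ω u v · ω u d = ‖u‖² ⟪v, d⟫`, where
`⟪u, d⟫ = 0`, `|ω u d| = ‖u‖ ‖d‖` and `|ω u v| = sin ∠(u, v) ‖u‖ ‖v‖`.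
-/

open scoped RealInnerProductSpace

abbrev E2 := EuclideanSpace ℝ (Fin 2)

open InnerProductGeometry Module

section TwoDim

variable {V : Type*} [NormedAddCommGroup V] [InnerProductSpace ℝ V] [Fact (finrank ℝ V = 2)]

theorem Orientation.abs_areaForm_eq_sin_angle_mul_norm_mul_norm (o : Orientation ℝ V (Fin 2))
    (x y : V) : |o.areaForm x y| = Real.sin (angle x y) * (‖x‖ * ‖y‖) := by
  rw [sin_angle_mul_norm_mul_norm, ← Real.sqrt_sq_eq_abs, real_inner_self_eq_norm_sq,
    real_inner_self_eq_norm_sq]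
  congr 1
  linear_combination o.inner_sq_add_areaForm_sq x y

theorem norm_mul_sin_angle_mul_norm_of_inner_eq_zero {d u : V} (hdu : ⟪d, u⟫ = 0) (hu : u ≠ 0)
    (v : V) : ‖d‖ * Real.sin (angle v u) * ‖v‖ = |⟪v, d⟫| := by
  have : FiniteDimensional ℝ V := .of_fact_finrank_eq_two
  let o : Orientation ℝ V (Fin 2) := (finBasisOfFinrankEq ℝ V Fact.out).orientation
  have hu2 : 0 < ‖u‖ ^ 2 := by positivity
  have key := o.inner_mul_inner_add_areaForm_mul_areaForm u v d
  rw [real_inner_comm d u, hdu, mul_zero, zero_add] at key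
  have habs := congrArg abs key
  rw [abs_mul, abs_mul, o.abs_areaForm_eq_sin_angle_mul_norm_mul_norm,
    o.abs_areaForm_of_orthogonal (by rwa [real_inner_comm]), abs_of_pos hu2, angle_comm] at habs
  refine mul_left_cancel₀ hu2.ne' ?_
  linear_combination habs

end TwoDim

theorem inner_sub_sub_eq_zero_of_affine_eq {V : Type*} [NormedAddCommGroup V]
    [InnerProductSpace ℝ V] {g g' P Q : V} {c c' : ℝ} (hP : ⟪g, P⟫ + c = ⟪g', P⟫ + c')
    (hQ : ⟪g, Q⟫ + c = ⟪g', Q⟫ + c') : ⟪g - g', Q - P⟫ = 0 := by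
  simp only [inner_sub_left, inner_sub_right]
  linarith

/-- Lemma 2.1 (with Remark 2.1): for affine functions `U₀, U₁, Ũ₁` on `ℝ²` with constant
gradients `g0, g1, gt1`, agreeing as stated across the edges `PQ` and `PA` of the triangle
`APQ`, one has `‖∇(Ũ₁ − U₁)‖ · sin(α̃) · ‖A − P‖ = |⟨A − P, ∇(U₀ − U₁)⟩|`,
where `α̃` is the angle of the triangle at `P`. -/
theorem stmt_0 (A P Q : E2) (hind : AffineIndependent ℝ ![A, P, Q])
    (g0 g1 gt1 : E2) (c0 c1 ct1 : ℝ)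
    (U0 U1 Ut1 : E2 → ℝ)
    (hU0 : ∀ x, U0 x = ⟪g0, x⟫ + c0)
    (hU1 : ∀ x, U1 x = ⟪g1, x⟫ + c1)
    (hUt1 : ∀ x, Ut1 x = ⟪gt1, x⟫ + ct1)
    (h1 : Ut1 P = U1 P) (h2 : Ut1 Q = U1 Q)
    (h3 : Ut1 P = U0 P) (h4 : Ut1 A = U0 A) :
    ‖gt1 - g1‖ * Real.sin (EuclideanGeometry.angle A P Q) * ‖A - P‖ =
      |⟪A - P, g0 - g1⟫| := by
  rw [hUt1, hU1] at h1 h2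
  rw [hUt1, hU0] at h3 h4
  have hPQ : Q - P ≠ 0 := sub_ne_zero.mpr (hind.injective.ne (by decide : (2 : Fin 3) ≠ 1))
  have hPQ_normal : ⟪gt1 - g1, Q - P⟫ = 0 := inner_sub_sub_eq_zero_of_affine_eq h1 h2
  have hPA_normal : ⟪gt1 - g0, A - P⟫ = 0 := inner_sub_sub_eq_zero_of_affine_eq h3 h4
  have hjump : ⟪A - P, g0 - g1⟫ = ⟪A - P, gt1 - g1⟫ := by
    rw [← sub_sub_sub_cancel_left g1 g0 gt1, inner_sub_right, real_inner_comm (gt1 - g0),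
      hPA_normal, sub_zero]
  have : Fact (finrank ℝ E2 = 2) := ⟨finrank_euclideanSpace_fin⟩
  rw [hjump]
  exact norm_mul_sin_angle_mul_norm_of_inner_eq_zero hPQ_normal hPQ (A - P)
end

section
/- Let N ≥ 1 be an integer and let h₀, …, h_N and a₀, …, a_N be real numbers with hᵢ > 0 for all i = 0, …, N. Suppose Σᵢ₌₀^N hᵢ aᵢ² = A, Σᵢ₌₀^N hᵢ aᵢ = 0, and Σᵢ₌₀^N hᵢ = L, where A ≥ 0. Then Σᵢ₌₁^N (aᵢ − aᵢ₋₁)² ≥ A/(L·N). -/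
/-!
Since `∑ hᵢ aᵢ = 0` with positive weights, every `aᵢ` has some `aⱼ` of opposite sign, so
`aᵢ² ≤ (aᵢ - aⱼ)²`, and `|aᵢ - aⱼ|` is bounded by the total variation `V = ∑ |aᵢ₊₁ - aᵢ|`.
Hence `A ≤ L V²`, and Cauchy–Schwarz gives `V² ≤ N ∑ (aᵢ₊₁ - aᵢ)²`.
-/

open Finset

theorem abs_sub_le_sum_abs_sub_succ (a : ℕ → ℝ) {N p q : ℕ} (hp : p ≤ N) (hq : q ≤ N) :
    |a p - a q| ≤ ∑ i ∈ range N, |a (i + 1) - a i| := by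
  wlog hqp : q ≤ p generalizing p q
  · rw [abs_sub_comm]
    exact this hq hp (le_of_not_ge hqp)
  calc |a p - a q| = |∑ i ∈ Ico q p, (a (i + 1) - a i)| := by rw [sum_Ico_sub a hqp]
    _ ≤ ∑ i ∈ Ico q p, |a (i + 1) - a i| := abs_sum_le_sum_abs _ _
    _ ≤ ∑ i ∈ range N, |a (i + 1) - a i| := by
      refine sum_le_sum_of_subset_of_nonneg (fun i hi => ?_) fun _ _ _ => abs_nonneg _
      rw [mem_Ico] at hi
      exact mem_range.mpr (hi.2.trans_le hp)

theorem exists_mul_nonpos_of_sum_mul_eq_zero {ι : Type*} {s : Finset ι} (hs : s.Nonempty)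
    {w x : ι → ℝ} (hw : ∀ i ∈ s, 0 < w i) (hwx : ∑ i ∈ s, w i * x i = 0) (c : ℝ) :
    ∃ j ∈ s, x j * c ≤ 0 := by
  by_contra! hpos
  have : 0 < ∑ i ∈ s, w i * x i * c :=
    sum_pos (fun i hi => by rw [mul_assoc]; exact mul_pos (hw i hi) (hpos i hi)) hs
  rw [← sum_mul, hwx, zero_mul] at this
  exact this.false

theorem sq_sum_abs_sub_succ_le (a : ℕ → ℝ) (N : ℕ) :
    (∑ i ∈ range N, |a (i + 1) - a i|) ^ 2 ≤ N * ∑ i ∈ range N, (a (i + 1) - a i) ^ 2 := by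
  simpa only [sq_abs, card_range] using
    sq_sum_le_card_mul_sum_sq (s := range N) (f := fun i => |a (i + 1) - a i|)

theorem sq_le_sq_sum_abs_sub_succ_of_weighted_sum_eq_zero {N : ℕ} {h a : ℕ → ℝ}
    (hpos : ∀ i ≤ N, 0 < h i) (hzero : ∑ i ∈ range (N + 1), h i * a i = 0) {i : ℕ}
    (hi : i ≤ N) : a i ^ 2 ≤ (∑ k ∈ range N, |a (k + 1) - a k|) ^ 2 := by
  obtain ⟨j, hj, hji⟩ := exists_mul_nonpos_of_sum_mul_eq_zero nonempty_range_add_one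
    (fun k hk => hpos k (Nat.lt_succ_iff.mp (mem_range.mp hk))) hzero (a i)
  calc a i ^ 2 ≤ |a i - a j| ^ 2 := by rw [sq_abs]; nlinarith
    _ ≤ _ := by
      gcongr
      exact abs_sub_le_sum_abs_sub_succ a hi (Nat.lt_succ_iff.mp (mem_range.mp hj))

theorem stmt_3_general (N : ℕ) (h a : ℕ → ℝ) (A L : ℝ)
    (hpos : ∀ i ≤ N, 0 < h i)
    (hA : ∑ i ∈ Finset.range (N + 1), h i * (a i) ^ 2 = A)
    (hzero : ∑ i ∈ Finset.range (N + 1), h i * a i = 0)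
    (hL : ∑ i ∈ Finset.range (N + 1), h i = L) :
    A / (L * N) ≤ ∑ i ∈ Finset.range N, (a (i + 1) - a i) ^ 2 := by
  have hpos' : ∀ i ∈ range (N + 1), 0 < h i := fun i hi =>
    hpos i (Nat.lt_succ_iff.mp (mem_range.mp hi))
  have hL0 : 0 ≤ L := hL ▸ sum_nonneg fun i hi => (hpos' i hi).le
  set V := ∑ i ∈ range N, |a (i + 1) - a i|
  have hAV : A ≤ L * V ^ 2 := by
    rw [← hA, ← hL, sum_mul]
    refine sum_le_sum fun i hi => mul_le_mul_of_nonneg_left ?_ (hpos' i hi).le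
    exact sq_le_sq_sum_abs_sub_succ_of_weighted_sum_eq_zero hpos hzero
      (Nat.lt_succ_iff.mp (mem_range.mp hi))
  refine div_le_of_le_mul₀ (by positivity) (sum_nonneg fun _ _ => sq_nonneg _) ?_
  calc A ≤ L * V ^ 2 := hAV
    _ ≤ L * (N * ∑ i ∈ range N, (a (i + 1) - a i) ^ 2) := by
      gcongr
      exact sq_sum_abs_sub_succ_le a N
    _ = _ := by ring

/-- Lemma 2.5: if `h₀,…,h_N > 0`, `Σ hᵢ aᵢ² = A`, `Σ hᵢ aᵢ = 0` and `Σ hᵢ = L` with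
`A ≥ 0`, then `Σ_{i=1}^N (aᵢ − aᵢ₋₁)² ≥ A/(L·N)`. -/
theorem stmt_3 (N : ℕ) (hN : 1 ≤ N) (h a : ℕ → ℝ) (A L : ℝ)
    (hpos : ∀ i ≤ N, 0 < h i)
    (hA : ∑ i ∈ Finset.range (N + 1), h i * (a i) ^ 2 = A)
    (hzero : ∑ i ∈ Finset.range (N + 1), h i * a i = 0)
    (hL : ∑ i ∈ Finset.range (N + 1), h i = L)
    (hA0 : 0 ≤ A) :
    A / (L * N) ≤ ∑ i ∈ Finset.range N, (a (i + 1) - a i) ^ 2 :=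
  stmt_3_general N h a A L hpos hA hzero hL
end

section
/- Let N ≥ 1 be an integer, let 0 = x₀ < x₁ < ⋯ < x_{N+1} = L be a partition of the interval [0, L] (L > 0), and let w : [0, L] → ℝ be continuous, affine on each subinterval [xᵢ, xᵢ₊₁] with slope sᵢ for i = 0, …, N, and satisfy w(0) = w(L) = 0. Then Σᵢ₌₁^N (sᵢ − sᵢ₋₁)² ≥ (Σᵢ₌₀^N (xᵢ₊₁ − xᵢ) sᵢ²)/(L·N). (Note that Σᵢ₌₀^N (xᵢ₊₁ − xᵢ) sᵢ = w(L) − w(0) = 0, and Σᵢ₌₀^N (xᵢ₊₁ − xᵢ) sᵢ² is the squared H¹(0,L)-seminorm of w.) -/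
/-!
Since `w(0) = w(L) = 0`, the weighted mean `Σ hᵢ sᵢ` of the slopes vanishes, so some slope is
`≤ 0` and some is `≥ 0`; hence every `sᵢ²` is bounded by the square of a slope difference
`(sᵢ - sⱼ)²`. Telescoping and Cauchy–Schwarz bound that by `N · Σ (sₖ₊₁ - sₖ)²`, and summing
against the weights `hᵢ`, whose total is `L`, gives the claim.
-/

open Finset

lemma sq_sub_le_mul_sum_sq_sub_succ_of_le (s : ℕ → ℝ) {N i j : ℕ} (hi : i ≤ N) (hji : j ≤ i) :
    (s i - s j) ^ 2 ≤ N * ∑ k ∈ range N, (s (k + 1) - s k) ^ 2 := by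
  have htel : s i - s j = ∑ k ∈ Ico j i, (s (k + 1) - s k) := by
    rw [sum_Ico_eq_sub _ hji, sum_range_sub s, sum_range_sub s]
    ring
  have hcard : ((Ico j i).card : ℝ) ≤ N := by
    rw [Nat.card_Ico]
    exact_mod_cast (Nat.sub_le i j).trans hi
  have hsub : ∑ k ∈ Ico j i, (s (k + 1) - s k) ^ 2 ≤ ∑ k ∈ range N, (s (k + 1) - s k) ^ 2 :=
    sum_le_sum_of_subset_of_nonneg
      (fun k hk => mem_range.2 ((mem_Ico.1 hk).2.trans_le hi)) (fun _ _ _ => sq_nonneg _)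
  calc (s i - s j) ^ 2 = (∑ k ∈ Ico j i, (s (k + 1) - s k)) ^ 2 := by rw [htel]
    _ ≤ (Ico j i).card * ∑ k ∈ Ico j i, (s (k + 1) - s k) ^ 2 := sq_sum_le_card_mul_sum_sq
    _ ≤ N * ∑ k ∈ range N, (s (k + 1) - s k) ^ 2 :=
        mul_le_mul hcard hsub (sum_nonneg fun _ _ => sq_nonneg _) (Nat.cast_nonneg N)

lemma sq_sub_le_mul_sum_sq_sub_succ (s : ℕ → ℝ) {N i j : ℕ} (hi : i ≤ N) (hj : j ≤ N) :
    (s i - s j) ^ 2 ≤ N * ∑ k ∈ range N, (s (k + 1) - s k) ^ 2 := by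
  rcases le_total j i with hji | hij
  · exact sq_sub_le_mul_sum_sq_sub_succ_of_le s hi hji
  · rw [← neg_sub, neg_sq]
    exact sq_sub_le_mul_sum_sq_sub_succ_of_le s hj hij

section WeightedMean

variable {ι : Type*} {t : Finset ι} {h s : ι → ℝ}

lemma exists_nonpos_of_sum_mul_eq_zero (hh : ∀ i ∈ t, 0 < h i) (hsum : ∑ i ∈ t, h i * s i = 0)
    (ht : t.Nonempty) : ∃ j ∈ t, s j ≤ 0 := by
  obtain ⟨j, hj, hhs⟩ :=
    exists_le_of_sum_le ht (f := fun i => h i * s i) (g := fun _ => 0) (by simp [hsum])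
  exact ⟨j, hj, nonpos_of_mul_nonpos_right hhs (hh j hj)⟩

lemma sq_le_of_sum_mul_eq_zero (hh : ∀ i ∈ t, 0 < h i) (hsum : ∑ i ∈ t, h i * s i = 0)
    {C : ℝ} (hC : ∀ i ∈ t, ∀ j ∈ t, (s i - s j) ^ 2 ≤ C) {i : ι} (hi : i ∈ t) :
    s i ^ 2 ≤ C := by
  rcases le_total 0 (s i) with hsi | hsi
  · obtain ⟨j, hj, hsj⟩ := exists_nonpos_of_sum_mul_eq_zero hh hsum ⟨i, hi⟩
    nlinarith [hC i hi j hj]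
  · have hsum' : ∑ i ∈ t, h i * (-s i) = 0 := by simp [hsum]
    obtain ⟨j, hj, hsj⟩ := exists_nonpos_of_sum_mul_eq_zero hh hsum' ⟨i, hi⟩
    nlinarith [hC i hi j hj]

end WeightedMean

lemma sum_sub_mul_slope_eq {n : ℕ} {x s w : ℕ → ℝ}
    (haff : ∀ i < n, w (i + 1) = w i + s i * (x (i + 1) - x i)) :
    ∑ i ∈ range n, (x (i + 1) - x i) * s i = w n - w 0 := by
  rw [← sum_range_sub w]
  refine sum_congr rfl fun i hi => ?_
  rw [haff i (mem_range.1 hi)]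
  ring

theorem stmt_4_general (N : ℕ) (L : ℝ) (hL : 0 < L)
    (x : ℕ → ℝ) (s : ℕ → ℝ) (w : ℝ → ℝ)
    (hx0 : x 0 = 0) (hxN : x (N + 1) = L)
    (hmono : ∀ i ≤ N, x i < x (i + 1))
    (haff : ∀ i ≤ N, ∀ t ∈ Set.Icc (x i) (x (i + 1)),
      w t = w (x i) + s i * (t - x i))
    (hw0 : w 0 = 0) (hwL : w L = 0) :
    (∑ i ∈ Finset.range (N + 1), (x (i + 1) - x i) * (s i) ^ 2) / (L * N) ≤
      ∑ i ∈ Finset.range N, (s (i + 1) - s i) ^ 2 := by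
  set J := ∑ i ∈ range N, (s (i + 1) - s i) ^ 2
  have hpos : ∀ i ∈ range (N + 1), 0 < x (i + 1) - x i := fun i hi =>
    sub_pos.2 (hmono i (Nat.lt_succ_iff.1 (mem_range.1 hi)))
  have hmean : ∑ i ∈ range (N + 1), (x (i + 1) - x i) * s i = 0 := by
    rw [sum_sub_mul_slope_eq (w := fun i => w (x i)) fun i hi =>
      haff i (Nat.lt_succ_iff.1 hi) _ ⟨(hmono i (Nat.lt_succ_iff.1 hi)).le, le_rfl⟩]
    simp [hx0, hxN, hw0, hwL]
  have hslope : ∀ i ∈ range (N + 1), s i ^ 2 ≤ N * J := fun i hi =>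
    sq_le_of_sum_mul_eq_zero hpos hmean (fun i hi j hj => sq_sub_le_mul_sum_sq_sub_succ s
      (Nat.lt_succ_iff.1 (mem_range.1 hi)) (Nat.lt_succ_iff.1 (mem_range.1 hj))) hi
  refine div_le_of_le_mul₀ (by positivity) (sum_nonneg fun _ _ => sq_nonneg _) ?_
  calc ∑ i ∈ range (N + 1), (x (i + 1) - x i) * s i ^ 2
      ≤ ∑ i ∈ range (N + 1), (x (i + 1) - x i) * (N * J) :=
        sum_le_sum fun i hi => mul_le_mul_of_nonneg_left (hslope i hi) (hpos i hi).le
    _ = J * (L * N) := by rw [← sum_mul, sum_range_sub x, hxN, hx0]; ring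

/-- The core of Lemma 2.6: for a continuous piecewise linear function `w` on `[0,L]` with
partition `0 = x₀ < x₁ < ⋯ < x_{N+1} = L`, slope `sᵢ` on `[xᵢ, xᵢ₊₁]`, and
`w(0) = w(L) = 0`, the sum of squared slope jumps satisfies
`Σ_{i=1}^N (sᵢ − sᵢ₋₁)² ≥ (Σᵢ (xᵢ₊₁ − xᵢ) sᵢ²)/(L·N)`. -/
theorem stmt_4 (N : ℕ) (hN : 1 ≤ N) (L : ℝ) (hL : 0 < L)
    (x : ℕ → ℝ) (s : ℕ → ℝ) (w : ℝ → ℝ)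
    (hx0 : x 0 = 0) (hxN : x (N + 1) = L)
    (hmono : ∀ i ≤ N, x i < x (i + 1))
    (hcont : ContinuousOn w (Set.Icc 0 L))
    (haff : ∀ i ≤ N, ∀ t ∈ Set.Icc (x i) (x (i + 1)),
      w t = w (x i) + s i * (t - x i))
    (hw0 : w 0 = 0) (hwL : w L = 0) :
    (∑ i ∈ Finset.range (N + 1), (x (i + 1) - x i) * (s i) ^ 2) / (L * N) ≤
      ∑ i ∈ Finset.range N, (s (i + 1) - s i) ^ 2 :=
  stmt_4_general N L hL x s w hx0 hxN hmono haff hw0 hwL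
end

section
/- Let K = conv{A, B, C} ⊂ ℝ² be a nondegenerate triangle whose interior angle at A is greater than or equal to its interior angles at B and at C (A is a maximum-angle vertex). Let h_K = diam K, let x_K be the orthogonal projection of A onto the line through B and C, let v₁ = (C − B)/‖C − B‖, and let v₂ be a unit vector orthogonal to v₁. Let u : ℝ² → ℝ be twice continuously differentiable with ‖D²u(x)‖ ≤ M (operator norm of the Hessian) for all x ∈ K, and let v_h : ℝ² → ℝ be an affine function satisfying the modified Lagrange interpolation conditions ⟨∇v_h, v₂⟩ = ⟨∇u(x_K), v₂⟩, v_h(B) = u(B), v_h(C) = u(C). Then ∫_K ‖∇u(x) − ∇v_h(x)‖² dx ≤ 13 · h_K² · M² · |K|, where |K| denotes the area of K. -/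
/-!
The component of `∇u − ∇v_h` along `BC` vanishes at some point of `[B, C]` by the mean value
theorem, and its component along `v₂` vanishes at `x_K`, which lies on `[B, C]` because the angles
at `B` and `C` are at most `π / 2`. As `∇u` is `M`-Lipschitz on the convex set `K`, both components
are bounded by `M h_K` on all of `K`, so `‖∇u − ∇v_h‖² ≤ 2 M² h_K²` pointwise, and integrating
gives the estimate even with `2` in place of `13`.
-/

open MeasureTheory
open scoped RealInnerProductSpace

open EuclideanGeometry Real

section

variable {F : Type*} [NormedAddCommGroup F] [InnerProductSpace ℝ F]

theorem InnerProductGeometry.inner_nonneg_of_angle_le_pi_div_two {x y : F}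
    (h : angle x y ≤ π / 2) : 0 ≤ ⟪x, y⟫ := by
  rw [← cos_angle_mul_norm_mul_norm]
  have : 0 ≤ cos (angle x y) :=
    cos_nonneg_of_mem_Icc ⟨by linarith [angle_nonneg x y, pi_pos], h⟩
  positivity

theorem EuclideanGeometry.angle_le_pi_div_two_of_angle_le_angle {A B C : F}
    (h : ∠ A B C ≤ ∠ B A C) : ∠ A B C ≤ π / 2 := by
  rcases eq_or_ne A B with rfl | hAB
  · simp
  have hsum := angle_add_angle_add_angle_eq_pi C hAB.symm
  rw [angle_comm C A B] at hsum
  linarith [angle_nonneg B C A]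

theorem mem_segment_of_angle_le_pi_div_two {A B C x : F} (hBC : B ≠ C) {t : ℝ}
    (hx : x = B + t • (C - B)) (hperp : ⟪A - x, C - B⟫ = 0)
    (hB : ∠ A B C ≤ π / 2) (hC : ∠ A C B ≤ π / 2) : x ∈ segment ℝ B C := by
  have hB' : 0 ≤ ⟪A - B, C - B⟫ := InnerProductGeometry.inner_nonneg_of_angle_le_pi_div_two hB
  have hC' : 0 ≤ ⟪A - C, B - C⟫ := InnerProductGeometry.inner_nonneg_of_angle_le_pi_div_two hC
  have hpos : 0 < ‖C - B‖ ^ 2 := by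
    have := norm_pos_iff.2 (sub_ne_zero.2 hBC.symm)
    positivity
  have hAB : ⟪A - B, C - B⟫ = t * ‖C - B‖ ^ 2 := by
    rw [hx, show A - (B + t • (C - B)) = (A - B) - t • (C - B) by abel, inner_sub_left,
      real_inner_smul_left, real_inner_self_eq_norm_sq] at hperp
    linarith
  have hAC : ⟪A - C, B - C⟫ = (1 - t) * ‖C - B‖ ^ 2 := by
    rw [show A - C = (A - B) - (C - B) by abel, show B - C = -(C - B) by abel,
      inner_neg_right, inner_sub_left, real_inner_self_eq_norm_sq, hAB]
    ring
  rw [segment_eq_image']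
  exact ⟨t, ⟨nonneg_of_mul_nonneg_left (hAB ▸ hB') hpos,
    sub_nonneg.1 (nonneg_of_mul_nonneg_left (hAC ▸ hC') hpos)⟩, hx.symm⟩

theorem norm_sq_eq_inner_sq_add_inner_sq (hF : Module.finrank ℝ F = 2) {e₁ e₂ : F}
    (he : Orthonormal ℝ ![e₁, e₂]) (w : F) : ‖w‖ ^ 2 = ⟪e₁, w⟫ ^ 2 + ⟪e₂, w⟫ ^ 2 := by
  have : FiniteDimensional ℝ F := Module.finite_of_finrank_eq_succ hF
  let b := (basisOfOrthonormalOfCardEqFinrank he (by simp [hF])).toOrthonormalBasis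
    (by rwa [coe_basisOfOrthonormalOfCardEqFinrank])
  have hb : ⇑b = ![e₁, e₂] := by
    simp [b, coe_basisOfOrthonormalOfCardEqFinrank]
  rw [← b.sum_sq_inner_right, Fin.sum_univ_two, hb]
  rfl

theorem norm_sq_le_of_abs_inner_le (hF : Module.finrank ℝ F = 2) {d e w : F} {a : ℝ}
    (hd : d ≠ 0) (he : ‖e‖ = 1) (hde : ⟪d, e⟫ = 0)
    (hwd : |⟪w, d⟫| ≤ a * ‖d‖) (hwe : |⟪w, e⟫| ≤ a) : ‖w‖ ^ 2 ≤ 2 * a ^ 2 := by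
  have hd₀ : 0 < ‖d‖ := norm_pos_iff.2 hd
  have hed : ⟪e, d⟫ = 0 := by rw [real_inner_comm]; exact hde
  have horth : Orthonormal ℝ ![‖d‖⁻¹ • d, e] := by
    rw [orthonormal_iff_ite]
    intro i j
    fin_cases i <;> fin_cases j <;>
      simp [norm_smul, real_inner_smul_left, real_inner_smul_right, hde, hed, he, hd₀.ne']
  have hwd' : |⟪‖d‖⁻¹ • d, w⟫| ≤ a := by
    rw [real_inner_smul_left, abs_mul, abs_inv, abs_norm, real_inner_comm,
      inv_mul_le_iff₀ hd₀, mul_comm]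
    exact hwd
  rw [norm_sq_eq_inner_sq_add_inner_sq hF horth w, real_inner_comm w e]
  nlinarith [sq_le_sq' (abs_le.1 hwd').1 (abs_le.1 hwd').2,
    sq_le_sq' (abs_le.1 hwe).1 (abs_le.1 hwe).2]

theorem sq_norm_sub_le_of_inner_eq (hF : Module.finrank ℝ F = 2) {G : F → F} {K : Set F}
    (hK : Bornology.IsBounded K) {M : ℝ} (hM : 0 ≤ M)
    (hG : ∀ x ∈ K, ∀ y ∈ K, ‖G x - G y‖ ≤ M * ‖x - y‖) {d e g p q : F}
    (hd : d ≠ 0) (he : ‖e‖ = 1) (hde : ⟪d, e⟫ = 0) (hp : p ∈ K) (hq : q ∈ K)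
    (hgd : ⟪g, d⟫ = ⟪G p, d⟫) (hge : ⟪g, e⟫ = ⟪G q, e⟫) {x : F} (hx : x ∈ K) :
    ‖G x - g‖ ^ 2 ≤ 2 * (M * Metric.diam K) ^ 2 := by
  have hvar : ∀ y ∈ K, ∀ v, |⟪G x - G y, v⟫| ≤ M * Metric.diam K * ‖v‖ := fun y hy v =>
    calc |⟪G x - G y, v⟫| ≤ ‖G x - G y‖ * ‖v‖ := abs_real_inner_le_norm _ _
      _ ≤ M * Metric.diam K * ‖v‖ := by
        gcongr
        refine (hG x hx y hy).trans (mul_le_mul_of_nonneg_left ?_ hM)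
        rw [← dist_eq_norm]
        exact Metric.dist_le_diam_of_mem hK hx hy
  refine norm_sq_le_of_abs_inner_le hF hd he hde ?_ ?_
  · rw [inner_sub_left, hgd, ← inner_sub_left]
    exact hvar p hp d
  · rw [inner_sub_left, hge, ← inner_sub_left, ← mul_one (M * _), ← he]
    exact hvar q hq e

variable [CompleteSpace F]

theorem Convex.norm_gradient_sub_le {u : F → ℝ} {s : Set F} {M : ℝ} (hs : Convex ℝ s)
    (hu : ∀ x ∈ s, DifferentiableAt ℝ (fderiv ℝ u) x)
    (hM : ∀ x ∈ s, ‖fderiv ℝ (fderiv ℝ u) x‖ ≤ M) {x y : F} (hx : x ∈ s) (hy : y ∈ s) :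
    ‖gradient u x - gradient u y‖ ≤ M * ‖x - y‖ := by
  rw [gradient, gradient, ← map_sub, LinearIsometryEquiv.norm_map]
  exact hs.norm_image_sub_le_of_norm_fderiv_le hu hM hy hx

theorem exists_mem_segment_inner_gradient_eq {u : F → ℝ} (hu : Differentiable ℝ u) (x y : F) :
    ∃ z ∈ segment ℝ x y, ⟪gradient u z, y - x⟫ = u y - u x := by
  obtain ⟨z, hz, h⟩ := domain_mvt (fun z _ => (hu z).hasFDerivAt.hasFDerivWithinAt)
    convex_univ (Set.mem_univ x) (Set.mem_univ y)
  exact ⟨z, hz, by rw [inner_gradient_left, h]⟩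

end

/-- Lemma 3.3, estimate (3.5): the modified Lagrange interpolant `v_h` (affine, with
gradient `g` and constant `c`) of a `C²` function `u` on a triangle `K = conv{A,B,C}`
with maximum-angle vertex `A` satisfies
`∫_K ‖∇u − ∇v_h‖² ≤ 13 h_K² M² |K|`, where `M` bounds the operator norm of the Hessian
of `u` on `K`, `x_K` is the foot of the altitude from `A`, and `v₂ ⊥ BC` is a unit
vector. -/
theorem stmt_8 (A B C xK v₂ g : E2) (c M : ℝ)
    (hind : AffineIndependent ℝ ![A, B, C])
    (hmaxB : EuclideanGeometry.angle A B C ≤ EuclideanGeometry.angle B A C)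
    (hmaxC : EuclideanGeometry.angle A C B ≤ EuclideanGeometry.angle B A C)
    (hxK_mem : ∃ t : ℝ, xK = B + t • (C - B))
    (hxK_perp : ⟪A - xK, C - B⟫ = 0)
    (hv₂_unit : ‖v₂‖ = 1)
    (hv₂_perp : ⟪v₂, C - B⟫ = 0)
    (u : E2 → ℝ) (hu : ContDiff ℝ 2 u)
    (hM : ∀ x ∈ convexHull ℝ ({A, B, C} : Set E2), ‖fderiv ℝ (fderiv ℝ u) x‖ ≤ M)
    (hgrad : ⟪g, v₂⟫ = ⟪gradient u xK, v₂⟫)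
    (hB : ⟪g, B⟫ + c = u B)
    (hC : ⟪g, C⟫ + c = u C) :
    ∫ x in convexHull ℝ ({A, B, C} : Set E2), ‖gradient u x - g‖ ^ 2 ≤
      13 * (Metric.diam (convexHull ℝ ({A, B, C} : Set E2))) ^ 2 * M ^ 2 *
        (volume (convexHull ℝ ({A, B, C} : Set E2))).toReal := by
  set K := convexHull ℝ ({A, B, C} : Set E2)
  have hBC : B ≠ C := hind.injective.ne (show (1 : Fin 3) ≠ 2 by decide)
  have hK : IsCompact K := (Set.toFinite _).isCompact_convexHull ℝ
  have hBCK : segment ℝ B C ⊆ K := by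
    rw [← convexHull_pair]
    exact convexHull_mono (by simp)
  have hM₀ : 0 ≤ M := le_trans (by positivity) (hM A (subset_convexHull ℝ _ (by simp)))
  have hLip : ∀ x ∈ K, ∀ y ∈ K, ‖gradient u x - gradient u y‖ ≤ M * ‖x - y‖ :=
    fun x hx y hy => (convex_convexHull ℝ _).norm_gradient_sub_le
      (fun z _ => ((hu.fderiv_right (m := 1) le_rfl).differentiable one_ne_zero) z) hM hx hy
  obtain ⟨p, hp, hpBC⟩ := exists_mem_segment_inner_gradient_eq (hu.differentiable two_ne_zero) B C
  obtain ⟨t, hxK⟩ := hxK_mem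
  have hxKK : xK ∈ K := hBCK <| mem_segment_of_angle_le_pi_div_two hBC hxK hxK_perp
    (angle_le_pi_div_two_of_angle_le_angle hmaxB)
    (angle_le_pi_div_two_of_angle_le_angle (by rwa [angle_comm C A B]))
  have hgBC : ⟪g, C - B⟫ = ⟪gradient u p, C - B⟫ := by rw [hpBC, inner_sub_right]; linarith
  have hpt : ∀ x ∈ K, ‖‖gradient u x - g‖ ^ 2‖ ≤ 2 * (M * Metric.diam K) ^ 2 := fun x hx => by
    rw [Real.norm_of_nonneg (by positivity)]
    exact sq_norm_sub_le_of_inner_eq finrank_euclideanSpace_fin hK.isBounded hM₀ hLip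
      (sub_ne_zero.2 hBC.symm) hv₂_unit (by rwa [real_inner_comm]) (hBCK hp) hxKK hgBC hgrad hx
  calc ∫ x in K, ‖gradient u x - g‖ ^ 2
      ≤ 2 * (M * Metric.diam K) ^ 2 * volume.real K :=
        (le_abs_self _).trans (norm_setIntegral_le_of_norm_le_const hK.measure_lt_top hpt)
    _ ≤ 13 * Metric.diam K ^ 2 * M ^ 2 * (volume K).toReal := by
        rw [Measure.real]
        nlinarith [show 0 ≤ (M * Metric.diam K) ^ 2 * (volume K).toReal by positivity]
end

section
/- Let u : ℝ² → ℝ be twice continuously differentiable with ‖D²u(x)‖ ≤ M (operator norm of the Hessian) for all x ∈ ℝ², let x₀ ∈ ℝ² and r > 0, let v(x) = u(x₀) + ⟨∇u(x₀), x − x₀⟩ be the tangent plane of u at x₀, and define w : ℝ² → ℝ by w(x) = (v(x) − u(x)) · ψ_r(x − x₀). Then: (a) w(x) = v(x) − u(x) whenever ‖x − x₀‖ ≤ r, and w(x) = 0 whenever ‖x − x₀‖ ≥ 2r; (b) ∫_{ℝ²} ‖∇w(x)‖² dx ≤ 1600 π r⁴ M²; (c) ∫ ‖D²w(x)‖_F²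 dx ≤ 4 · 149² · π r² M², the last integral taken over the (full-measure) set of points where w is twice differentiable. -/
/-!
Write `w = g φ` with `g = v - u` and `φ = ψ_r(· - x₀)`. Since `‖D²u‖ ≤ M`, the mean value
inequality gives `|g x| ≤ M ‖x - x₀‖²` and `‖Dg x‖ ≤ M ‖x - x₀‖`. The bump has `|φ| ≤ 1` and
`‖Dφ‖ ≤ 3 / (2r)`, and off the spheres of radii `r` and `2r` it is twice differentiable with
`‖D²φ‖ ≤ 15 / (2r²)`: on the annulus, `Dφ(y) = c(‖y‖) ⟪y, ·⟫` with an explicit rational `c`.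
By the product rule, on the disc of radius `2r` we get `‖Dw‖ ≤ 8rM` everywhere and
`‖D²w‖ ≤ 37M` off the two (null) spheres, while outside that disc `w` vanishes near every point.
Integrating over a disc of area `4πr²` gives (b) and (c), with room to spare in the constants.
-/

open MeasureTheory
open scoped RealInnerProductSpace

/-- The spline `ψ̃`: `1` on `[0,1]`, `2(x−2)³ + 3(x−2)²` on `[1,2]`, `0` for `x > 2`. -/
noncomputable def psiTilde (x : ℝ) : ℝ :=
  if x ≤ 1 then 1 else if x ≤ 2 then 2 * (x - 2) ^ 3 + 3 * (x - 2) ^ 2 else 0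

/-- The radial 'table mountain' bump `ψ_r(x) = ψ̃(‖x‖/r)` on `ℝ²`. -/
noncomputable def psiR (r : ℝ) (x : E2) : ℝ :=
  psiTilde (‖x‖ / r)

/-- Frobenius norm of a bilinear form on `ℝ²` (e.g. a Hessian), computed in the standard
orthonormal basis. -/
noncomputable def frobNorm (f : E2 →L[ℝ] E2 →L[ℝ] ℝ) : ℝ :=
  Real.sqrt (∑ i : Fin 2, ∑ j : Fin 2,
    (f (EuclideanSpace.single i 1) (EuclideanSpace.single j 1)) ^ 2)

open Set Filter Topology Metric
open scoped Real

noncomputable def psiTildeDeriv (t : ℝ) : ℝ :=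
  (Icc 1 2).indicator (fun s => 6 * (s - 1) * (s - 2)) t

lemma psiTilde_of_le_one {t : ℝ} (ht : t ≤ 1) : psiTilde t = 1 := if_pos ht

lemma psiTilde_of_mem_Icc {t : ℝ} (ht : t ∈ Icc (1 : ℝ) 2) :
    psiTilde t = 2 * (t - 2) ^ 3 + 3 * (t - 2) ^ 2 := by
  unfold psiTilde
  split_ifs with h1 h2
  · norm_num [le_antisymm h1 ht.1]
  · rfl
  · exact absurd ht.2 h2

lemma psiTilde_of_two_le {t : ℝ} (ht : 2 ≤ t) : psiTilde t = 0 := by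
  unfold psiTilde
  split_ifs with h1 h2
  · linarith
  · norm_num [le_antisymm h2 ht]
  · rfl

lemma abs_psiTilde_le_one (t : ℝ) : |psiTilde t| ≤ 1 := by
  unfold psiTilde
  split_ifs with h1 h2
  · norm_num
  · rw [abs_le]; constructor <;> nlinarith [sq_nonneg (t - 1), sq_nonneg (t - 2)]
  · norm_num

lemma psiTildeDeriv_of_le_one {t : ℝ} (ht : t ≤ 1) : psiTildeDeriv t = 0 := by
  by_cases h : t ∈ Icc (1 : ℝ) 2
  · simp [psiTildeDeriv, le_antisymm ht h.1]
  · exact indicator_of_notMem h _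

lemma psiTildeDeriv_of_two_le {t : ℝ} (ht : 2 ≤ t) : psiTildeDeriv t = 0 := by
  by_cases h : t ∈ Icc (1 : ℝ) 2
  · simp [psiTildeDeriv, le_antisymm h.2 ht]
  · exact indicator_of_notMem h _

lemma abs_psiTildeDeriv_le (t : ℝ) : |psiTildeDeriv t| ≤ 3 / 2 := by
  unfold psiTildeDeriv indicator
  split_ifs with h
  · rw [abs_le]; constructor <;> nlinarith [h.1, h.2, sq_nonneg (2 * t - 3)]
  · norm_num

lemma hasDerivAt_of_eqOn_of_eqOn {F : Type*} [NormedAddCommGroup F] [NormedSpace ℝ F]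
    {f g h : ℝ → F} {s t : Set ℝ} {a : ℝ} {d : F}
    (hg : HasDerivAt g d a) (hh : HasDerivAt h d a) (hfg : EqOn f g s) (hfh : EqOn f h t)
    (has : a ∈ s) (hat : a ∈ t) (hst : s ∪ t ∈ 𝓝 a) : HasDerivAt f d a :=
  ((hg.hasDerivWithinAt.congr hfg (hfg has)).union
    (hh.hasDerivWithinAt.congr hfh (hfh hat))).hasDerivAt hst

lemma hasDerivAt_psiTilde (t : ℝ) : HasDerivAt psiTilde (psiTildeDeriv t) t := by
  set P : ℝ → ℝ := fun s => 2 * (s - 2) ^ 3 + 3 * (s - 2) ^ 2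
  have hP (s : ℝ) : HasDerivAt P (6 * (s - 1) * (s - 2)) s := by
    have h := (hasDerivAt_id' s).sub_const 2
    refine (((h.pow 3).const_mul 2).add ((h.pow 2).const_mul 3)).congr_deriv ?_
    ring
  have hOne : EqOn psiTilde (fun _ => 1) (Iic 1) := fun s hs => psiTilde_of_le_one hs
  have hCubic : EqOn psiTilde P (Icc 1 2) := fun s hs => psiTilde_of_mem_Icc hs
  have hZero : EqOn psiTilde (fun _ => 0) (Ici 2) := fun s hs => psiTilde_of_two_le hs
  -- `ψ̃` is `C¹` because the cubic has derivative `0` at both junctions `1` and `2`.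
  rcases lt_or_ge t 1 with h1 | h1
  · rw [psiTildeDeriv_of_le_one h1.le]
    exact (hasDerivAt_const t 1).congr_of_eventuallyEq (hOne.eventuallyEq_of_mem (Iic_mem_nhds h1))
  rcases le_or_gt t 2 with h2 | h2
  · have hD : psiTildeDeriv t = 6 * (t - 1) * (t - 2) :=
      indicator_of_mem (show t ∈ Icc (1 : ℝ) 2 from ⟨h1, h2⟩) _
    rcases h1.eq_or_lt with rfl | h1
    · rw [hD, show (6 : ℝ) * (1 - 1) * (1 - 2) = 0 by norm_num]
      exact hasDerivAt_of_eqOn_of_eqOn (hasDerivAt_const 1 1) (by simpa using hP 1)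
        hOne hCubic self_mem_Iic (left_mem_Icc.2 one_le_two)
        (by rw [Iic_union_Icc_eq_Iic one_le_two]; exact Iic_mem_nhds one_lt_two)
    rcases h2.eq_or_lt with rfl | h2
    · rw [hD, show (6 : ℝ) * (2 - 1) * (2 - 2) = 0 by norm_num]
      exact hasDerivAt_of_eqOn_of_eqOn (by simpa using hP 2) (hasDerivAt_const 2 0)
        hCubic hZero (right_mem_Icc.2 one_le_two) self_mem_Ici
        (by rw [Icc_union_Ici_eq_Ici one_le_two]; exact Ici_mem_nhds one_lt_two)
    rw [hD]
    exact (hP t).congr_of_eventuallyEq (hCubic.eventuallyEq_of_mem (Icc_mem_nhds h1 h2))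
  · rw [psiTildeDeriv_of_two_le h2.le]
    exact (hasDerivAt_const t 0).congr_of_eventuallyEq (hZero.eventuallyEq_of_mem (Ici_mem_nhds h2))

section Radial

variable {E : Type*} [NormedAddCommGroup E] [InnerProductSpace ℝ E]

lemma hasFDerivAt_norm {y : E} (hy : y ≠ 0) :
    HasFDerivAt (fun z : E => ‖z‖) (‖y‖⁻¹ • innerSL ℝ y) y := by
  have h := (hasStrictFDerivAt_norm_sq y).hasFDerivAt.sqrt (by positivity)
  simp only [Real.sqrt_sq (norm_nonneg _)] at h
  convert h using 1
  ext z
  simp only [smul_apply, coe_innerSL_apply, smul_eq_mul, one_div, mul_inv_rev,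
    nsmul_eq_mul, Nat.cast_ofNat]
  field_simp

lemma exists_hasFDerivAt_smul_innerSL {c : ℝ → ℝ} {c' : ℝ} {y : E} (hy : y ≠ 0)
    (hc : HasDerivAt c c' ‖y‖) :
    ∃ Φ : E →L[ℝ] E →L[ℝ] ℝ, HasFDerivAt (fun z => c ‖z‖ • innerSL ℝ z) Φ y ∧
      ‖Φ‖ ≤ |c ‖y‖| + |c'| * ‖y‖ := by
  -- over `ℝ` the conjugate-linear `innerSL` is linear by definition
  let L : E →L[ℝ] E →L[ℝ] ℝ := innerSL ℝ
  have hLy (z : E) : ‖L z‖ = ‖z‖ := innerSL_apply_norm ℝ z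
  have hL : ‖L‖ ≤ 1 := L.opNorm_le_bound zero_le_one fun z => by rw [hLy, one_mul]
  refine ⟨_, (hc.comp_hasFDerivAt y (hasFDerivAt_norm hy)).smul L.hasFDerivAt, ?_⟩
  have hy' : 0 < ‖y‖ := norm_pos_iff.2 hy
  have h1 : ‖c ‖y‖ • L‖ ≤ |c ‖y‖| :=
    (L.opNorm_smul_le _).trans (mul_le_of_le_one_right (norm_nonneg (c ‖y‖)) hL)
  have h2 : ‖(c' • ‖y‖⁻¹ • L y).smulRight (L y)‖ ≤ |c'| * ‖y‖ := by
    rw [ContinuousLinearMap.norm_smulRight_apply, norm_smul, norm_smul, hLy, norm_inv, norm_norm,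
      Real.norm_eq_abs, inv_mul_cancel₀ hy'.ne', mul_one]
  exact (ContinuousLinearMap.opNorm_add_le _ _).trans (add_le_add h1 h2)

end Radial

/-- `Dψ_r(y) = ψ̃'(‖y‖/r) / (r ‖y‖) • ⟪y, ·⟫`; at `y = 0` the coefficient is the junk value
`x / 0 = 0`, which is harmless since `ψ̃' = 0` near `0`. -/
noncomputable def psiRCoeff (r t : ℝ) : ℝ :=
  psiTildeDeriv (t / r) / (r * t)

noncomputable def psiRDeriv (r : ℝ) (y : E2) : E2 →L[ℝ] ℝ :=
  psiRCoeff r ‖y‖ • innerSL ℝ y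

section Bump

variable {r : ℝ}

lemma psiR_of_norm_le (hr : 0 < r) {y : E2} (hy : ‖y‖ ≤ r) : psiR r y = 1 :=
  psiTilde_of_le_one ((div_le_one hr).2 hy)

lemma psiR_of_two_mul_le_norm (hr : 0 < r) {y : E2} (hy : 2 * r ≤ ‖y‖) : psiR r y = 0 :=
  psiTilde_of_two_le ((le_div_iff₀ hr).2 hy)

lemma psiRCoeff_of_le (hr : 0 < r) {t : ℝ} (ht : t ≤ r) : psiRCoeff r t = 0 := by
  rw [psiRCoeff, psiTildeDeriv_of_le_one ((div_le_one hr).2 ht), zero_div]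

lemma psiRCoeff_of_two_mul_le (hr : 0 < r) {t : ℝ} (ht : 2 * r ≤ t) : psiRCoeff r t = 0 := by
  rw [psiRCoeff, psiTildeDeriv_of_two_le ((le_div_iff₀ hr).2 ht), zero_div]

lemma abs_psiRCoeff_le (hr : 0 < r) {t : ℝ} (ht : 0 < t) :
    |psiRCoeff r t| ≤ 3 / (2 * (r * t)) := by
  rw [psiRCoeff, abs_div, abs_of_pos (mul_pos hr ht)]
  calc |psiTildeDeriv (t / r)| / (r * t) ≤ 3 / 2 / (r * t) := by
        gcongr; exact abs_psiTildeDeriv_le _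
    _ = 3 / (2 * (r * t)) := div_div _ _ _

lemma psiRDeriv_of_norm_le (hr : 0 < r) {y : E2} (hy : ‖y‖ ≤ r) : psiRDeriv r y = 0 := by
  rw [psiRDeriv, psiRCoeff_of_le hr hy, zero_smul]

lemma psiRDeriv_of_two_mul_le_norm (hr : 0 < r) {y : E2} (hy : 2 * r ≤ ‖y‖) :
    psiRDeriv r y = 0 := by
  rw [psiRDeriv, psiRCoeff_of_two_mul_le hr hy, zero_smul]

lemma norm_psiRDeriv_le (hr : 0 < r) (y : E2) : ‖psiRDeriv r y‖ ≤ 3 / (2 * r) := by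
  rw [psiRDeriv, norm_smul, innerSL_apply_norm, Real.norm_eq_abs]
  rcases eq_or_ne y 0 with rfl | hy
  · simp only [norm_zero, mul_zero]; positivity
  have hy' : 0 < ‖y‖ := norm_pos_iff.2 hy
  calc |psiRCoeff r ‖y‖| * ‖y‖ ≤ 3 / (2 * (r * ‖y‖)) * ‖y‖ := by
        gcongr; exact abs_psiRCoeff_le hr hy'
    _ = 3 / (2 * r) := by field_simp

lemma hasFDerivAt_psiR (hr : 0 < r) (y : E2) : HasFDerivAt (psiR r) (psiRDeriv r y) y := by
  rcases lt_or_ge ‖y‖ r with hy | hy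
  · rw [psiRDeriv_of_norm_le hr hy.le]
    refine (hasFDerivAt_const 1 y).congr_of_eventuallyEq ?_
    filter_upwards [(isOpen_lt continuous_norm continuous_const).mem_nhds hy] with z hz
    exact psiR_of_norm_le hr (le_of_lt hz)
  have hy0 : y ≠ 0 := norm_pos_iff.1 (hr.trans_le hy)
  have hdiv : HasFDerivAt (fun z : E2 => ‖z‖ / r) (r⁻¹ • ‖y‖⁻¹ • innerSL ℝ y) y := by
    simpa only [div_eq_mul_inv] using (hasFDerivAt_norm hy0).mul_const r⁻¹
  refine ((hasDerivAt_psiTilde (‖y‖ / r)).comp_hasFDerivAt y hdiv).congr_fderiv ?_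
  rw [psiRDeriv, psiRCoeff, smul_smul, smul_smul]
  congr 1
  field_simp

lemma hasDerivAt_psiRCoeff (hr : 0 < r) {t : ℝ} (ht : r < t) (ht' : t < 2 * r) :
    HasDerivAt (psiRCoeff r) (6 / r ^ 2 * (1 / r - 2 * r / t ^ 2)) t := by
  have hpos : 0 < t := hr.trans ht
  have heq : psiRCoeff r =ᶠ[𝓝 t] fun s => 6 / r ^ 2 * (s / r - 3 + 2 * r * s⁻¹) := by
    filter_upwards [Ioo_mem_nhds ht ht'] with s hs
    have hs0 : 0 < s := hr.trans hs.1
    have hmem : s / r ∈ Icc (1 : ℝ) 2 :=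
      ⟨(one_le_div hr).2 hs.1.le, (div_le_iff₀ hr).2 (by linarith [hs.2])⟩
    rw [psiRCoeff, psiTildeDeriv, indicator_of_mem hmem]
    field_simp
    ring
  have hderiv := ((((hasDerivAt_id' t).div_const r).sub_const 3).add
    ((hasDerivAt_inv hpos.ne').const_mul (2 * r))).const_mul (6 / r ^ 2)
  refine (hderiv.congr_deriv ?_).congr_of_eventuallyEq heq
  field_simp
  ring

lemma exists_hasFDerivAt_psiRDeriv_of_lt_of_lt (hr : 0 < r) {y : E2} (h₁ : r < ‖y‖)
    (h₂ : ‖y‖ < 2 * r) :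
    ∃ Φ : E2 →L[ℝ] E2 →L[ℝ] ℝ, HasFDerivAt (psiRDeriv r) Φ y ∧ ‖Φ‖ ≤ 15 / (2 * r ^ 2) := by
  have hy : 0 < ‖y‖ := hr.trans h₁
  obtain ⟨Φ, hΦ, hΦle⟩ :=
    exists_hasFDerivAt_smul_innerSL (norm_pos_iff.1 hy) (hasDerivAt_psiRCoeff hr h₁ h₂)
  refine ⟨Φ, hΦ, hΦle.trans ?_⟩
  have hc : |psiRCoeff r ‖y‖| ≤ 3 / (2 * r ^ 2) :=
    (abs_psiRCoeff_le hr hy).trans (by gcongr; nlinarith)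
  have hc' : |6 / r ^ 2 * (1 / r - 2 * r / ‖y‖ ^ 2)| * ‖y‖ ≤ 6 / r ^ 2 := by
    have hrt : 0 < r * ‖y‖ := mul_pos hr hy
    have hquot : (1 / r - 2 * r / ‖y‖ ^ 2) * ‖y‖ = (‖y‖ ^ 2 - 2 * r ^ 2) / (r * ‖y‖) := by
      field_simp
    rw [abs_mul, abs_of_pos (by positivity : (0 : ℝ) < 6 / r ^ 2), mul_assoc,
      ← abs_of_pos hy, ← abs_mul, abs_of_pos hy, hquot, abs_div, abs_of_pos hrt]
    refine mul_le_of_le_one_right (by positivity) ((div_le_one hrt).2 (abs_le.2 ⟨?_, ?_⟩)) <;>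
      nlinarith
  calc _ ≤ 3 / (2 * r ^ 2) + 6 / r ^ 2 := add_le_add hc hc'
    _ = 15 / (2 * r ^ 2) := by field_simp; norm_num

lemma exists_hasFDerivAt_psiRDeriv (hr : 0 < r) {y : E2} (hy₁ : ‖y‖ ≠ r) (hy₂ : ‖y‖ ≠ 2 * r) :
    ∃ Φ : E2 →L[ℝ] E2 →L[ℝ] ℝ, HasFDerivAt (psiRDeriv r) Φ y ∧ ‖Φ‖ ≤ 15 / (2 * r ^ 2) := by
  have hzero {s : Set E2} (hs : IsOpen s) (hys : y ∈ s) (h : ∀ z ∈ s, psiRDeriv r z = 0) :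
      ∃ Φ : E2 →L[ℝ] E2 →L[ℝ] ℝ, HasFDerivAt (psiRDeriv r) Φ y ∧ ‖Φ‖ ≤ 15 / (2 * r ^ 2) := by
    refine ⟨0, ?_, ?_⟩
    · exact (hasFDerivAt_const 0 y).congr_of_eventuallyEq (eventually_of_mem (hs.mem_nhds hys) h)
    · rw [ContinuousLinearMap.opNorm_zero]; positivity
  rcases hy₁.lt_or_gt with h₁ | h₁
  · exact hzero (isOpen_lt continuous_norm continuous_const) h₁
      fun z hz => psiRDeriv_of_norm_le hr (le_of_lt hz)
  rcases hy₂.lt_or_gt with h₂ | h₂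
  · exact exists_hasFDerivAt_psiRDeriv_of_lt_of_lt hr h₁ h₂
  · exact hzero (isOpen_lt continuous_const continuous_norm) h₂
      fun z hz => psiRDeriv_of_two_mul_le_norm hr (le_of_lt hz)

end Bump

section Taylor

variable {E F : Type*} [NormedAddCommGroup E] [NormedSpace ℝ E]
  [NormedAddCommGroup F] [NormedSpace ℝ F] {u : E → F} {M : ℝ}

noncomputable def tangentPlane (u : E → F) (x₀ x : E) : F :=
  u x₀ + fderiv ℝ u x₀ (x - x₀)

lemma hasFDerivAt_tangentPlane (u : E → F) (x₀ x : E) :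
    HasFDerivAt (tangentPlane u x₀) (fderiv ℝ u x₀) x := by
  have h := ((fderiv ℝ u x₀).hasFDerivAt.comp x ((hasFDerivAt_id x).sub_const x₀)).const_add (u x₀)
  rwa [ContinuousLinearMap.comp_id] at h

lemma hasFDerivAt_tangentPlane_sub (hu : Differentiable ℝ u) (x₀ x : E) :
    HasFDerivAt (fun z => tangentPlane u x₀ z - u z) (fderiv ℝ u x₀ - fderiv ℝ u x) x :=
  (hasFDerivAt_tangentPlane u x₀ x).sub (hu x).hasFDerivAt

lemma norm_fderiv_sub_le (hu : Differentiable ℝ (fderiv ℝ u))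
    (hM : ∀ x, ‖fderiv ℝ (fderiv ℝ u) x‖ ≤ M) (x₀ x : E) :
    ‖fderiv ℝ u x - fderiv ℝ u x₀‖ ≤ M * ‖x - x₀‖ :=
  convex_univ.norm_image_sub_le_of_norm_fderiv_le (fun z _ => hu z) (fun z _ => hM z)
    (mem_univ _) (mem_univ _)

lemma norm_tangentPlane_sub_le (hu₁ : Differentiable ℝ u) (hu₂ : Differentiable ℝ (fderiv ℝ u))
    (hM : ∀ x, ‖fderiv ℝ (fderiv ℝ u) x‖ ≤ M) (x₀ x : E) :
    ‖tangentPlane u x₀ x - u x‖ ≤ M * ‖x - x₀‖ ^ 2 := by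
  have h := (convex_closedBall x₀ ‖x - x₀‖).norm_image_sub_le_of_norm_hasFDerivWithin_le'
    (fun z _ => (hu₁ z).hasFDerivAt.hasFDerivWithinAt) (φ := fderiv ℝ u x₀)
    (fun z hz => (norm_fderiv_sub_le hu₂ hM x₀ z).trans
      (mul_le_mul_of_nonneg_left (mem_closedBall_iff_norm.1 hz)
        ((ContinuousLinearMap.opNorm_nonneg _).trans (hM x₀))))
    (mem_closedBall_self (norm_nonneg _)) (mem_closedBall_iff_norm.2 le_rfl)
  calc ‖tangentPlane u x₀ x - u x‖ = ‖u x - u x₀ - fderiv ℝ u x₀ (x - x₀)‖ := by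
        rw [tangentPlane, ← norm_neg]; congr 1; abel
    _ ≤ M * ‖x - x₀‖ * ‖x - x₀‖ := h
    _ = M * ‖x - x₀‖ ^ 2 := by ring

end Taylor

section ProductRule

variable {E : Type*} [NormedAddCommGroup E] [NormedSpace ℝ E]

lemma norm_fderiv_fderiv_mul_le {f g : E → ℝ} {f' g' : E → E →L[ℝ] ℝ}
    {f'' g'' : E →L[ℝ] E →L[ℝ] ℝ} {x : E} (hf : ∀ z, HasFDerivAt f (f' z) z)
    (hg : ∀ z, HasFDerivAt g (g' z) z) (hf' : HasFDerivAt f' f'' x) (hg' : HasFDerivAt g' g'' x) :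
    ‖fderiv ℝ (fderiv ℝ fun z => f z * g z) x‖ ≤
      |f x| * ‖g''‖ + 2 * (‖f' x‖ * ‖g' x‖) + ‖f''‖ * |g x| := by
  have hD : fderiv ℝ (fun z => f z * g z) = fun z => f z • g' z + g z • f' z :=
    funext fun z => ((hf z).mul (hg z)).fderiv
  have hD' : HasFDerivAt (fun z => f z • g' z + g z • f' z)
      (f x • g'' + (f' x).smulRight (g' x) + (g x • f'' + (g' x).smulRight (f' x))) x :=
    ((hf x).smul hg').add ((hg x).smul hf')
  rw [hD, hD'.fderiv]
  have hsum {a : ℝ} {A : E →L[ℝ] E →L[ℝ] ℝ} {B C : E →L[ℝ] ℝ} :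
      ‖a • A + B.smulRight C‖ ≤ |a| * ‖A‖ + ‖B‖ * ‖C‖ :=
    (ContinuousLinearMap.opNorm_add_le _ _).trans (add_le_add (A.opNorm_smul_le a)
      (ContinuousLinearMap.norm_smulRight_apply B C).le)
  calc _ ≤ (|f x| * ‖g''‖ + ‖f' x‖ * ‖g' x‖) + (|g x| * ‖f''‖ + ‖g' x‖ * ‖f' x‖) :=
        (ContinuousLinearMap.opNorm_add_le _ _).trans (add_le_add hsum hsum)
    _ = _ := by ring

end ProductRule

lemma frobNorm_sq_le (A : E2 →L[ℝ] E2 →L[ℝ] ℝ) : frobNorm A ^ 2 ≤ 4 * ‖A‖ ^ 2 := by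
  have hentry (i j : Fin 2) :
      A (EuclideanSpace.single i 1) (EuclideanSpace.single j 1) ^ 2 ≤ ‖A‖ ^ 2 := by
    have h := A.le_opNorm₂ (EuclideanSpace.single i 1) (EuclideanSpace.single j 1)
    simp only [PiLp.norm_single, norm_one, mul_one] at h
    exact sq_le_sq' (abs_le.1 h).1 (abs_le.1 h).2
  rw [frobNorm, Real.sq_sqrt (by positivity)]
  calc _ ≤ ∑ _i : Fin 2, ∑ _j : Fin 2, ‖A‖ ^ 2 :=
        Finset.sum_le_sum fun i _ => Finset.sum_le_sum fun j _ => hentry i j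
    _ = 4 * ‖A‖ ^ 2 := by
        simp only [Finset.sum_const, Finset.card_univ, Fintype.card_fin, nsmul_eq_mul]; ring

lemma integral_le_mul_measureReal {α : Type*} [MeasurableSpace α] {μ : Measure α} {s : Set α}
    (hs : MeasurableSet s) (hμs : μ s ≠ ⊤) {g : α → ℝ} {c : ℝ} (hg₀ : ∀ x, 0 ≤ g x)
    (hgc : ∀ᵐ x ∂μ, x ∈ s → g x ≤ c) (hg : ∀ x ∉ s, g x = 0) :
    ∫ x, g x ∂μ ≤ c * μ.real s := by
  calc ∫ x, g x ∂μ ≤ ∫ x, s.indicator (fun _ => c) x ∂μ := by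
        refine integral_mono_of_nonneg (ae_of_all _ hg₀)
          ((integrableOn_const hμs).integrable_indicator hs) ?_
        filter_upwards [hgc] with x hx
        by_cases hxs : x ∈ s
        · simpa [hxs] using hx hxs
        · simp [hxs, hg x hxs]
    _ = c * μ.real s := by rw [integral_indicator_const _ hs, smul_eq_mul, mul_comm]

lemma EuclideanSpace.volume_real_closedBall_fin_two (x : E2) {R : ℝ} (hR : 0 ≤ R) :
    volume.real (closedBall x R) = π * R ^ 2 := by
  simp [measureReal_def, ENNReal.toReal_ofReal hR, Real.pi_pos.le, mul_comm]

lemma ae_norm_sub_ne {E : Type*} [NormedAddCommGroup E] [NormedSpace ℝ E] [MeasurableSpace E]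
    [BorelSpace E] [FiniteDimensional ℝ E] [Nontrivial E] (μ : Measure E) [μ.IsAddHaarMeasure]
    (x₀ : E) (ρ : ℝ) : ∀ᵐ x ∂μ, ‖x - x₀‖ ≠ ρ :=
  (measure_eq_zero_iff_ae_notMem.1 (μ.addHaar_sphere x₀ ρ)).mono fun _ hx h =>
    hx (mem_sphere_iff_norm.2 h)

noncomputable def clusterCorrection (u : E2 → ℝ) (x₀ : E2) (r : ℝ) (x : E2) : ℝ :=
  (tangentPlane u x₀ x - u x) * psiR r (x - x₀)

section Correction

variable {u : E2 → ℝ} {M r : ℝ} {x₀ : E2}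

lemma hasFDerivAt_psiR_sub (hr : 0 < r) (x₀ x : E2) :
    HasFDerivAt (fun z => psiR r (z - x₀)) (psiRDeriv r (x - x₀)) x := by
  have h := (hasFDerivAt_psiR hr (x - x₀)).comp x ((hasFDerivAt_id x).sub_const x₀)
  rwa [ContinuousLinearMap.comp_id] at h

lemma norm_fderiv_clusterCorrection_le (hu₁ : Differentiable ℝ u)
    (hu₂ : Differentiable ℝ (fderiv ℝ u)) (hM : ∀ x, ‖fderiv ℝ (fderiv ℝ u) x‖ ≤ M) (hr : 0 < r)
    {x : E2} (hx : ‖x - x₀‖ ≤ 2 * r) :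
    ‖fderiv ℝ (clusterCorrection u x₀ r) x‖ ≤ 8 * r * M := by
  have hM₀ : 0 ≤ M := (ContinuousLinearMap.opNorm_nonneg _).trans (hM x₀)
  have hD : HasFDerivAt (clusterCorrection u x₀ r) ((tangentPlane u x₀ x - u x) •
      psiRDeriv r (x - x₀) + psiR r (x - x₀) • (fderiv ℝ u x₀ - fderiv ℝ u x)) x :=
    (hasFDerivAt_tangentPlane_sub hu₁ x₀ x).mul (hasFDerivAt_psiR_sub hr x₀ x)
  have hgap : ‖tangentPlane u x₀ x - u x‖ ≤ M * (2 * r) ^ 2 :=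
    (norm_tangentPlane_sub_le hu₁ hu₂ hM x₀ x).trans (by gcongr)
  have hDgap : ‖fderiv ℝ u x₀ - fderiv ℝ u x‖ ≤ M * (2 * r) := by
    rw [norm_sub_rev]; exact (norm_fderiv_sub_le hu₂ hM x₀ x).trans (by gcongr)
  rw [hD.fderiv]
  calc _ ≤ ‖tangentPlane u x₀ x - u x‖ * ‖psiRDeriv r (x - x₀)‖ +
        ‖psiR r (x - x₀)‖ * ‖fderiv ℝ u x₀ - fderiv ℝ u x‖ :=
        (norm_add_le _ _).trans (add_le_add (norm_smul_le _ _) (norm_smul_le _ _))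
    _ ≤ M * (2 * r) ^ 2 * (3 / (2 * r)) + 1 * (M * (2 * r)) := by
        gcongr
        · exact norm_psiRDeriv_le hr _
        · exact abs_psiTilde_le_one _
    _ = 8 * r * M := by field_simp; ring

lemma norm_fderiv_fderiv_clusterCorrection_le (hu₁ : Differentiable ℝ u)
    (hu₂ : Differentiable ℝ (fderiv ℝ u)) (hM : ∀ x, ‖fderiv ℝ (fderiv ℝ u) x‖ ≤ M) (hr : 0 < r)
    {x : E2} (hx₁ : ‖x - x₀‖ ≠ r) (hx₂ : ‖x - x₀‖ < 2 * r) :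
    ‖fderiv ℝ (fderiv ℝ (clusterCorrection u x₀ r)) x‖ ≤ 37 * M := by
  have hM₀ : 0 ≤ M := (ContinuousLinearMap.opNorm_nonneg _).trans (hM x₀)
  obtain ⟨Φ, hΦ, hΦle⟩ := exists_hasFDerivAt_psiRDeriv hr hx₁ hx₂.ne
  have hΦ' : HasFDerivAt (fun z => psiRDeriv r (z - x₀)) Φ x := by
    have h := hΦ.comp x ((hasFDerivAt_id x).sub_const x₀)
    rwa [ContinuousLinearMap.comp_id] at h
  have hDgap_deriv : HasFDerivAt (fun z => fderiv ℝ u x₀ - fderiv ℝ u z)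
      (-fderiv ℝ (fderiv ℝ u) x) x := by
    have h := (hasFDerivAt_const (fderiv ℝ u x₀) x).sub (hu₂ x).hasFDerivAt
    rwa [zero_sub] at h
  have hgap : |tangentPlane u x₀ x - u x| ≤ M * (2 * r) ^ 2 :=
    (norm_tangentPlane_sub_le hu₁ hu₂ hM x₀ x).trans (by gcongr)
  have hDgap : ‖fderiv ℝ u x₀ - fderiv ℝ u x‖ ≤ M * (2 * r) := by
    rw [norm_sub_rev]; exact (norm_fderiv_sub_le hu₂ hM x₀ x).trans (by gcongr)
  have hD2u : ‖-fderiv ℝ (fderiv ℝ u) x‖ ≤ M :=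
    (norm_neg (E := E2 →L[ℝ] E2 →L[ℝ] ℝ) _).trans_le (hM x)
  have hψ : |psiR r (x - x₀)| ≤ 1 := abs_psiTilde_le_one _
  have hψ' := norm_psiRDeriv_le hr (x - x₀)
  refine (norm_fderiv_fderiv_mul_le (hasFDerivAt_tangentPlane_sub hu₁ x₀)
    (hasFDerivAt_psiR_sub hr x₀) hDgap_deriv hΦ').trans ?_
  calc _ ≤ M * (2 * r) ^ 2 * (15 / (2 * r ^ 2)) + 2 * (M * (2 * r) * (3 / (2 * r))) + M * 1 := by
        gcongr
    _ = 37 * M := by field_simp; ring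

lemma fderiv_clusterCorrection_eventuallyEq_zero (hr : 0 < r) {x : E2}
    (hx : 2 * r < ‖x - x₀‖) : fderiv ℝ (clusterCorrection u x₀ r) =ᶠ[𝓝 x] 0 := by
  have hzero : clusterCorrection u x₀ r =ᶠ[𝓝 x] 0 := by
    filter_upwards [(isOpen_lt continuous_const (continuous_sub_right x₀).norm).mem_nhds hx]
      with z hz
    rw [clusterCorrection, psiR_of_two_mul_le_norm hr hz.le, mul_zero]
    rfl
  simpa using hzero.fderiv

end Correction

section Integrals

variable {u : E2 → ℝ} {M r : ℝ} {x₀ : E2}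

lemma two_mul_lt_norm_sub_of_notMem_closedBall {x : E2} (hx : x ∉ closedBall x₀ (2 * r)) :
    2 * r < ‖x - x₀‖ :=
  lt_of_not_ge (mt mem_closedBall_iff_norm.2 hx)

lemma integral_norm_fderiv_clusterCorrection_sq_le (hu₁ : Differentiable ℝ u)
    (hu₂ : Differentiable ℝ (fderiv ℝ u)) (hM : ∀ x, ‖fderiv ℝ (fderiv ℝ u) x‖ ≤ M) (hr : 0 < r) :
    ∫ x, ‖fderiv ℝ (clusterCorrection u x₀ r) x‖ ^ 2 ≤ 256 * π * r ^ 4 * M ^ 2 := by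
  calc _ ≤ (8 * r * M) ^ 2 * volume.real (closedBall x₀ (2 * r)) :=
        integral_le_mul_measureReal measurableSet_closedBall measure_closedBall_lt_top.ne
          (fun _ => by positivity)
          (ae_of_all _ fun x hx => by
            gcongr
            exact norm_fderiv_clusterCorrection_le hu₁ hu₂ hM hr (mem_closedBall_iff_norm.1 hx))
          (fun x hx => by
            rw [(fderiv_clusterCorrection_eventuallyEq_zero hr
              (two_mul_lt_norm_sub_of_notMem_closedBall hx)).eq_of_nhds]
            simp)
    _ = 256 * π * r ^ 4 * M ^ 2 := by
        rw [EuclideanSpace.volume_real_closedBall_fin_two _ (by positivity)]; ring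

lemma integral_frobNorm_fderiv_fderiv_clusterCorrection_sq_le (hu₁ : Differentiable ℝ u)
    (hu₂ : Differentiable ℝ (fderiv ℝ u)) (hM : ∀ x, ‖fderiv ℝ (fderiv ℝ u) x‖ ≤ M) (hr : 0 < r) :
    ∫ x, frobNorm (fderiv ℝ (fderiv ℝ (clusterCorrection u x₀ r)) x) ^ 2 ≤
      21904 * π * r ^ 2 * M ^ 2 := by
  calc _ ≤ 4 * (37 * M) ^ 2 * volume.real (closedBall x₀ (2 * r)) := by
        refine integral_le_mul_measureReal measurableSet_closedBall measure_closedBall_lt_top.ne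
          (fun _ => by positivity) ?_ fun x hx => ?_
        · filter_upwards [ae_norm_sub_ne volume x₀ r, ae_norm_sub_ne volume x₀ (2 * r)]
            with x h₁ h₂ hx
          refine (frobNorm_sq_le _).trans ?_
          gcongr
          exact norm_fderiv_fderiv_clusterCorrection_le hu₁ hu₂ hM hr h₁
            ((mem_closedBall_iff_norm.1 hx).lt_of_ne h₂)
        · rw [(fderiv_clusterCorrection_eventuallyEq_zero hr
            (two_mul_lt_norm_sub_of_notMem_closedBall hx)).fderiv_eq]
          simp [frobNorm]
    _ = 21904 * π * r ^ 2 * M ^ 2 := by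
        rw [EuclideanSpace.volume_real_closedBall_fin_two _ (by positivity)]; ring

end Integrals

/-- Lemma 3.9: `w(x) = (v(x) − u(x)) ψ_r(x − x₀)`, where `v` is the tangent plane of `u`
at `x₀`, is a correction function for a single cluster: (a) `w = v − u` on the closed
ball of radius `r` around `x₀` and `w = 0` outside the ball of radius `2r`;
(b) `∫ ‖∇w‖² ≤ 1600 π r⁴ M²`; (c) `∫ ‖D²w‖_F² ≤ 4·149²·π r² M²` (the last integral over
the full-measure set where `w` is twice differentiable; the Hessian
`fderiv ℝ (fderiv ℝ w)` takes the junk value `0` off that set). -/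
theorem stmt_15 (u : E2 → ℝ) (hu : ContDiff ℝ 2 u) (M : ℝ)
    (hM : ∀ x : E2, ‖fderiv ℝ (fderiv ℝ u) x‖ ≤ M)
    (x₀ : E2) (r : ℝ) (hr : 0 < r)
    (v : E2 → ℝ) (hv : ∀ x, v x = u x₀ + ⟪gradient u x₀, x - x₀⟫)
    (w : E2 → ℝ) (hw : ∀ x, w x = (v x - u x) * psiR r (x - x₀)) :
    ((∀ x : E2, ‖x - x₀‖ ≤ r → w x = v x - u x) ∧
      (∀ x : E2, 2 * r ≤ ‖x - x₀‖ → w x = 0)) ∧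
    (∫ x, ‖gradient w x‖ ^ 2 ≤ 1600 * Real.pi * r ^ 4 * M ^ 2) ∧
    (∫ x, (frobNorm (fderiv ℝ (fderiv ℝ w) x)) ^ 2 ≤
        4 * 149 ^ 2 * Real.pi * r ^ 2 * M ^ 2) := by
  have hu₁ : Differentiable ℝ u := hu.differentiable (by norm_num)
  have hu₂ : Differentiable ℝ (fderiv ℝ u) :=
    (hu.fderiv_right (m := 1) (by norm_num)).differentiable (by norm_num)
  have hwW : w = clusterCorrection u x₀ r := funext fun x => by
    rw [hw, hv, clusterCorrection, tangentPlane, gradient, InnerProductSpace.toDual_symm_apply]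
  refine ⟨⟨fun x hx => ?_, fun x hx => ?_⟩, ?_, ?_⟩
  · rw [hw, psiR_of_norm_le hr hx, mul_one]
  · rw [hw, psiR_of_two_mul_le_norm hr hx, mul_zero]
  · have hgrad (x : E2) : ‖gradient w x‖ = ‖fderiv ℝ w x‖ :=
      (InnerProductSpace.toDual ℝ E2).symm.norm_map _
    simp_rw [hgrad, hwW]
    refine (integral_norm_fderiv_clusterCorrection_sq_le hu₁ hu₂ hM hr).trans ?_
    gcongr
    norm_num
  · rw [hwW]
    refine (integral_frobNorm_fderiv_fderiv_clusterCorrection_sq_le hu₁ hu₂ hM hr).trans ?_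
    gcongr
    norm_num
end
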